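/- The real vector space of real skew-symmetric n×n matrices A (Aᵗ = −A) satisfying A_{kk} = 0 and Σ_{l} A_{kl} = 0 for every row k has dimension (n−1)(n−2)/2. -/

import Mathlib

/-!
Deleting the last row and column maps alternating `n × n` matrices with zero row sums
isomorphically onto all alternating `(n-1) × (n-1)` matrices: the deleted column is forced to be
minus the row sums, and the deleted row then sums to zero because the entries of an alternating
matrix cancel in pairs. An alternating matrix of size `n - 1` is in turn freely determined by its
`(n-1).choose 2` entries above the diagonal.
-/

open Finset Matrix

section Alternating

variable (R ι : Type*) [Ring R]

def alternatingMatrices : Submodule R (Matrix ι ι R) where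
  carrier := {A | Aᵀ = -A ∧ ∀ i, A i i = 0}
  add_mem' {A B} hA hB := ⟨by rw [transpose_add, hA.1, hB.1, neg_add], fun i => by
    simp [hA.2 i, hB.2 i]⟩
  zero_mem' := ⟨by simp, fun _ => rfl⟩
  smul_mem' c A hA := ⟨by rw [transpose_smul, hA.1, smul_neg], fun i => by simp [hA.2 i]⟩

def rowSumZeroMatrices [Fintype ι] : Submodule R (Matrix ι ι R) where
  carrier := {A | ∀ i, ∑ j, A i j = 0}
  add_mem' {A B} hA hB i := by simp [sum_add_distrib, hA i, hB i]
  zero_mem' _ := by simp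
  smul_mem' c A hA i := by simp [← mul_sum, hA i]

variable {R ι}

lemma apply_swap_of_mem_alternatingMatrices {A : Matrix ι ι R}
    (hA : A ∈ alternatingMatrices R ι) (i j : ι) : A j i = -A i j :=
  congrFun (congrFun hA.1 i) j

lemma submatrix_mem_alternatingMatrices {κ : Type*} {A : Matrix ι ι R}
    (hA : A ∈ alternatingMatrices R ι) (f : κ → ι) :
    A.submatrix f f ∈ alternatingMatrices R κ :=
  ⟨by rw [transpose_submatrix, hA.1]; rfl, fun i => hA.2 (f i)⟩

lemma sum_sum_eq_zero_of_mem_alternatingMatrices [Fintype ι] {A : Matrix ι ι R}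
    (hA : A ∈ alternatingMatrices R ι) : ∑ i, ∑ j, A i j = 0 := by
  -- the swap `(i, j) ↦ (j, i)` pairs off entries summing to `0` and fixes only the diagonal
  rw [← Fintype.sum_prod_type' (fun i j => A i j)]
  refine sum_ninvolution Prod.swap (fun p => ?_) (fun p hp hswap => hp ?_) (fun _ => mem_univ _)
    Prod.swap_swap
  · rw [Prod.fst_swap, Prod.snd_swap, apply_swap_of_mem_alternatingMatrices hA, neg_add_cancel]
  · obtain ⟨i, j⟩ := p
    obtain rfl : j = i := congrArg Prod.fst hswap
    exact hA.2 j

end Alternating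

section UpperTriangle

variable {R ι : Type*} [Ring R] [LinearOrder ι]

def alternatingOfUpper (f : {p : ι × ι // p.1 < p.2} → R) : Matrix ι ι R :=
  Matrix.of fun i j =>
    if h : i < j then f ⟨(i, j), h⟩ else if h : j < i then -f ⟨(j, i), h⟩ else 0

lemma alternatingOfUpper_mem (f : {p : ι × ι // p.1 < p.2} → R) :
    alternatingOfUpper f ∈ alternatingMatrices R ι := by
  refine ⟨?_, fun i => by simp [alternatingOfUpper]⟩
  ext i j
  rcases lt_trichotomy i j with h | rfl | h
  · simp [alternatingOfUpper, h, h.not_gt]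
  · simp [alternatingOfUpper]
  · simp [alternatingOfUpper, h, h.not_gt]

lemma eq_of_forall_lt_of_mem_alternatingMatrices {A B : Matrix ι ι R}
    (hA : A ∈ alternatingMatrices R ι) (hB : B ∈ alternatingMatrices R ι)
    (h : ∀ i j, i < j → A i j = B i j) : A = B := by
  ext i j
  rcases lt_trichotomy i j with hij | rfl | hij
  · exact h i j hij
  · rw [hA.2, hB.2]
  · rw [apply_swap_of_mem_alternatingMatrices hA, apply_swap_of_mem_alternatingMatrices hB,
      h j i hij]

def alternatingMatricesEquivUpper :
    alternatingMatrices R ι ≃ₗ[R] ({p : ι × ι // p.1 < p.2} → R) where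
  toFun A p := (A : Matrix ι ι R) p.1.1 p.1.2
  map_add' _ _ := rfl
  map_smul' _ _ := rfl
  invFun f := ⟨alternatingOfUpper f, alternatingOfUpper_mem f⟩
  left_inv A := Subtype.ext <| eq_of_forall_lt_of_mem_alternatingMatrices
    (alternatingOfUpper_mem fun p => (A : Matrix ι ι R) p.1.1 p.1.2) A.2
    fun i j h => by simp [alternatingOfUpper, h]
  right_inv f := funext fun p => by simp [alternatingOfUpper, p.2]

lemma finrank_alternatingMatrices [Fintype ι] [StrongRankCondition R] :
    Module.finrank R (alternatingMatrices R ι) = (Fintype.card ι).choose 2 := by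
  rw [alternatingMatricesEquivUpper.finrank_eq, Module.finrank_fintype_fun_eq_card,
    Fintype.card_subtype, Fintype.card_product_filter_lt]

end UpperTriangle

section RowSums

variable {R : Type*} [Ring R] {m : ℕ}

/-- For alternating `B`, the unique extension to an alternating matrix with zero row sums: the new
column holds the negated row sums of `B`. -/
def extendByRowSums (B : Matrix (Fin m) (Fin m) R) : Matrix (Fin (m + 1)) (Fin (m + 1)) R :=
  Matrix.of <|
    Fin.snoc (fun i => Fin.snoc (B i) (-∑ k, B i k)) (Fin.snoc (fun j => ∑ k, B j k) 0)

@[simp] lemma extendByRowSums_castSucc_castSucc (B : Matrix (Fin m) (Fin m) R) (i j : Fin m) :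
    extendByRowSums B i.castSucc j.castSucc = B i j := by
  simp [extendByRowSums]

@[simp] lemma extendByRowSums_castSucc_last (B : Matrix (Fin m) (Fin m) R) (i : Fin m) :
    extendByRowSums B i.castSucc (Fin.last m) = -∑ k, B i k := by
  simp [extendByRowSums]

@[simp] lemma extendByRowSums_last_castSucc (B : Matrix (Fin m) (Fin m) R) (j : Fin m) :
    extendByRowSums B (Fin.last m) j.castSucc = ∑ k, B j k := by
  simp [extendByRowSums]

@[simp] lemma extendByRowSums_last_last (B : Matrix (Fin m) (Fin m) R) :
    extendByRowSums B (Fin.last m) (Fin.last m) = 0 := by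
  simp [extendByRowSums]

lemma extendByRowSums_mem {B : Matrix (Fin m) (Fin m) R}
    (hB : B ∈ alternatingMatrices R (Fin m)) :
    extendByRowSums B ∈
      alternatingMatrices R (Fin (m + 1)) ⊓ rowSumZeroMatrices R (Fin (m + 1)) := by
  refine ⟨⟨?_, fun k => ?_⟩, fun k => ?_⟩
  · ext i j
    induction i using Fin.lastCases <;> induction j using Fin.lastCases
    case cast.cast i j => simpa using apply_swap_of_mem_alternatingMatrices hB i j
    all_goals simp
  · induction k using Fin.lastCases <;> simp [hB.2]
  · induction k using Fin.lastCases <;>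
      simp [Fin.sum_univ_castSucc, sum_sum_eq_zero_of_mem_alternatingMatrices hB]

lemma extendByRowSums_submatrix {A : Matrix (Fin (m + 1)) (Fin (m + 1)) R}
    (hA : A ∈ alternatingMatrices R (Fin (m + 1)) ⊓ rowSumZeroMatrices R (Fin (m + 1))) :
    extendByRowSums (A.submatrix Fin.castSucc Fin.castSucc) = A := by
  have hlast (i : Fin (m + 1)) : A i (Fin.last m) = -∑ k : Fin m, A i k.castSucc := by
    rw [eq_neg_iff_add_eq_zero, add_comm, ← Fin.sum_univ_castSucc]
    exact hA.2 i
  ext i j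
  induction i using Fin.lastCases <;> induction j using Fin.lastCases
  · rw [extendByRowSums_last_last, hA.1.2]
  · rw [extendByRowSums_last_castSucc, apply_swap_of_mem_alternatingMatrices hA.1, hlast, neg_neg]
    rfl
  · rw [extendByRowSums_castSucc_last, hlast]
    rfl
  · exact extendByRowSums_castSucc_castSucc _ _ _

def alternatingRowSumZeroEquiv :
    ↥(alternatingMatrices R (Fin (m + 1)) ⊓ rowSumZeroMatrices R (Fin (m + 1))) ≃ₗ[R]
      alternatingMatrices R (Fin m) where
  toFun A := ⟨A.1.submatrix Fin.castSucc Fin.castSucc,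
    submatrix_mem_alternatingMatrices A.2.1 Fin.castSucc⟩
  map_add' _ _ := rfl
  map_smul' _ _ := rfl
  invFun B := ⟨extendByRowSums B, extendByRowSums_mem B.2⟩
  left_inv A := Subtype.ext (extendByRowSums_submatrix A.2)
  right_inv B := Subtype.ext <| by ext i j; simp

end RowSums

/-- The real vector space of real skew-symmetric `n × n` matrices with zero diagonal and all
row sums zero has dimension `(n-1)(n-2)/2`. -/
theorem stmt_10 (n : ℕ) (hn : 2 ≤ n)
    (S : Submodule ℝ (Matrix (Fin n) (Fin n) ℝ))
    (hS : ∀ A : Matrix (Fin n) (Fin n) ℝ,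
      A ∈ S ↔ (A.transpose = -A ∧ (∀ k, A k k = 0) ∧ ∀ k, ∑ l, A k l = 0)) :
    Module.finrank ℝ S = (n - 1) * (n - 2) / 2 := by
  obtain ⟨m, rfl⟩ : ∃ m, n = m + 1 := ⟨n - 1, by omega⟩
  obtain rfl : S = alternatingMatrices ℝ (Fin (m + 1)) ⊓ rowSumZeroMatrices ℝ (Fin (m + 1)) :=
    SetLike.ext fun A => (hS A).trans and_assoc.symm
  rw [alternatingRowSumZeroEquiv.finrank_eq, finrank_alternatingMatrices, Fintype.card_fin,
    Nat.choose_two_right]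
  rfl
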